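/- The partial sums of the alternating harmonic series satisfy h_n = log 2 + (−1)^{n−1}/(2n) + (−1)^n/(4n²) + O(1/n³) as n → ∞; precisely, there exist constants A > 0 and N such that for all n ≥ N, |h_n − log 2 − (−1)^{n−1}/(2n) − (−1)^n/(4n²)| ≤ A/n³. -/
import Mathlib


open Finset

/-- `h n` is the `n`-th partial sum of the alternating harmonic series. -/
noncomputable def altHarmonic (n : ℕ) : ℝ := ∑ j ∈ Finset.Icc 1 n, (-1 : ℝ)^(j - 1) / j

open Filter Real Topology

lemma altHarmonic_succ (n : ℕ) :
    altHarmonic (n + 1) = altHarmonic n + (-1 : ℝ)^n / (n + 1) := by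
  unfold altHarmonic
  rw [Finset.sum_Icc_succ_top (by omega : 1 ≤ n + 1)]
  simp [Nat.add_sub_cancel]

noncomputable def dSeq (n : ℕ) : ℝ :=
  altHarmonic n - Real.log 2 - (-1 : ℝ)^(n - 1) / (2 * (n : ℝ))
    - (-1 : ℝ)^n / (4 * (n : ℝ)^2)

lemma dSeq_step (n : ℕ) (hn : 1 ≤ n) :
    dSeq (n + 1) - dSeq n = (-1 : ℝ)^n / (4 * (n : ℝ)^2 * ((n : ℝ) + 1)^2) := by
  obtain ⟨m, rfl⟩ : ∃ m, n = m + 1 := ⟨n - 1, by omega⟩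
  unfold dSeq
  rw [altHarmonic_succ]
  simp only [Nat.add_sub_cancel]
  have h1 : ((m : ℝ) + 1) ≠ 0 := by positivity
  have h2 : ((m : ℝ) + 1 + 1) ≠ 0 := by positivity
  push_cast
  field_simp
  ring

lemma telescope (f : ℕ → ℝ) {n m : ℕ} (h : n ≤ m) :
    ∑ k ∈ Finset.Ico n m, (f (k + 1) - f k) = f m - f n := by
  induction m, h using Nat.le_induction with
  | base => simp
  | succ m hm ih =>
    rw [Finset.sum_Ico_succ_top hm, ih]
    ring

lemma dSeq_dist {n m : ℕ} (hn : 1 ≤ n) (hm : n ≤ m) :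
    |dSeq m - dSeq n| ≤ 1 / (n : ℝ)^3 := by
  rw [← telescope dSeq hm]
  calc |∑ k ∈ Finset.Ico n m, (dSeq (k + 1) - dSeq k)|
      ≤ ∑ k ∈ Finset.Ico n m, |dSeq (k + 1) - dSeq k| := Finset.abs_sum_le_sum_abs _ _
    _ ≤ ∑ k ∈ Finset.Ico n m, ((fun j : ℕ => -(1 / (j : ℝ)^3)) (k + 1)
          - (fun j : ℕ => -(1 / (j : ℝ)^3)) k) := by
        apply Finset.sum_le_sum
        intro k hk
        have hk1 : 1 ≤ k := le_trans hn (Finset.mem_Ico.mp hk).1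
        have hkr : (1 : ℝ) ≤ (k : ℝ) := by exact_mod_cast hk1
        rw [dSeq_step k hk1, abs_div, abs_pow, abs_neg, abs_one, one_pow,
          abs_of_pos (by positivity)]
        simp only
        push_cast
        rw [neg_sub_neg, div_sub_div _ _ (by positivity : ((k : ℝ))^3 ≠ 0) (by positivity : ((k : ℝ) + 1)^3 ≠ 0)]
        rw [div_le_div_iff₀ (by positivity) (by positivity)]
        nlinarith [sq_nonneg ((k : ℝ) - 1), sq_nonneg ((k : ℝ) + 1), pow_pos (by linarith : (0:ℝ) < (k:ℝ)) 3]
    _ = -(1 / (m : ℝ)^3) - -(1 / (n : ℝ)^3) := telescope (fun j : ℕ => -(1 / (j : ℝ)^3)) hm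
    _ ≤ 1 / (n : ℝ)^3 := by
        have : (0 : ℝ) ≤ 1 / (m : ℝ)^3 := by positivity
        linarith

lemma altHarmonic_two_mul (k : ℕ) :
    altHarmonic (2 * k) = (harmonic (2 * k) : ℝ) - (harmonic k : ℝ) := by
  induction k with
  | zero => simp [altHarmonic]
  | succ k ih =>
    have e : 2 * (k + 1) = (2 * k + 1) + 1 := by ring
    rw [e, altHarmonic_succ, altHarmonic_succ, ih]
    have h1 : harmonic (2 * k + 1 + 1) = harmonic (2 * k + 1) + (↑(2 * k + 2) : ℚ)⁻¹ :=
      harmonic_succ _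
    have h2 : harmonic (2 * k + 1) = harmonic (2 * k) + (↑(2 * k + 1) : ℚ)⁻¹ :=
      harmonic_succ _
    have h3 : harmonic (k + 1) = harmonic k + (↑(k + 1) : ℚ)⁻¹ := harmonic_succ _
    rw [h1, h2, h3]
    have p1 : (-1 : ℝ)^(2 * k) = 1 := Even.neg_one_pow ⟨k, by ring⟩
    have p2 : (-1 : ℝ)^(2 * k + 1) = -1 := Odd.neg_one_pow ⟨k, by ring⟩
    rw [p1, p2]
    push_cast
    have hk1 : ((k : ℝ) + 1) ≠ 0 := by positivity
    have hk2 : (2 * (k : ℝ) + 1) ≠ 0 := by positivity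
    have hk3 : (2 * (k : ℝ) + 2) ≠ 0 := by positivity
    field_simp
    ring

lemma tendsto_altHarmonic_two_mul :
    Tendsto (fun k : ℕ => altHarmonic (2 * k)) atTop (𝓝 (Real.log 2)) := by
  have hmul : Tendsto (fun k : ℕ => 2 * k) atTop atTop :=
    tendsto_atTop_mono (fun n => by simp only [id_eq]; omega) tendsto_id
  have hγ2 : Tendsto (fun k : ℕ => (harmonic (2 * k) : ℝ) - Real.log (2 * k : ℕ)) atTop
      (𝓝 Real.eulerMascheroniConstant) := Real.tendsto_harmonic_sub_log.comp hmul
  have hγ1 : Tendsto (fun k : ℕ => (harmonic k : ℝ) - Real.log k) atTop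
      (𝓝 Real.eulerMascheroniConstant) := Real.tendsto_harmonic_sub_log
  have h : Tendsto (fun k : ℕ => ((harmonic (2 * k) : ℝ) - Real.log (2 * k : ℕ))
      - ((harmonic k : ℝ) - Real.log k) + Real.log 2) atTop
      (𝓝 (Real.eulerMascheroniConstant - Real.eulerMascheroniConstant + Real.log 2)) :=
    (hγ2.sub hγ1).add_const _
  rw [sub_self, zero_add] at h
  apply h.congr'
  filter_upwards [eventually_ge_atTop 1] with k hk
  have hk0 : ((k : ℝ)) ≠ 0 := Nat.cast_ne_zero.mpr (by omega)
  have hlog : Real.log (2 * k : ℕ) = Real.log 2 + Real.log k := by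
    push_cast
    rw [Real.log_mul (by norm_num) hk0]
  rw [altHarmonic_two_mul, hlog]
  ring

lemma tendsto_dSeq_two_mul : Tendsto (fun k : ℕ => dSeq (2 * k)) atTop (𝓝 0) := by
  have hA : Tendsto (fun k : ℕ => altHarmonic (2 * k) - Real.log 2) atTop (𝓝 0) := by
    have := tendsto_altHarmonic_two_mul.sub_const (Real.log 2)
    rwa [sub_self] at this
  have hB : Tendsto (fun k : ℕ => (4 * (k : ℝ))⁻¹) atTop (𝓝 0) := by
    apply Filter.Tendsto.inv_tendsto_atTop
    exact (tendsto_natCast_atTop_atTop).const_mul_atTop (by norm_num)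
  have hC : Tendsto (fun k : ℕ => (16 * (k : ℝ)^2)⁻¹) atTop (𝓝 0) := by
    apply Filter.Tendsto.inv_tendsto_atTop
    apply tendsto_atTop_mono _ (tendsto_natCast_atTop_atTop (R := ℝ))
    intro k
    rcases Nat.eq_zero_or_pos k with h | h
    · simp [h]
    · have : (1 : ℝ) ≤ (k : ℝ) := by exact_mod_cast h
      nlinarith
  have h : Tendsto (fun k : ℕ => (altHarmonic (2 * k) - Real.log 2) + (4 * (k : ℝ))⁻¹
      - (16 * (k : ℝ)^2)⁻¹) atTop (𝓝 (0 + 0 - 0)) := (hA.add hB).sub hC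
  rw [add_zero, sub_zero] at h
  apply h.congr'
  filter_upwards [eventually_ge_atTop 1] with k hk
  have hkr : (1 : ℝ) ≤ (k : ℝ) := by exact_mod_cast hk
  have hk0 : ((k : ℝ)) ≠ 0 := by linarith
  unfold dSeq
  have p1 : (-1 : ℝ)^(2 * k - 1) = -1 := Odd.neg_one_pow ⟨k - 1, by omega⟩
  have p2 : (-1 : ℝ)^(2 * k) = 1 := Even.neg_one_pow ⟨k, by ring⟩
  rw [p1, p2]
  push_cast
  field_simp
  ring

/-- `h n = log 2 + (−1)^{n−1}/(2n) + (−1)^n/(4n²) + O(1/n³)` as `n → ∞`. -/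
theorem altHarmonic_expansion :
    ∃ A > (0 : ℝ), ∃ N : ℕ, ∀ n : ℕ, n ≥ N →
      |altHarmonic n - Real.log 2 - (-1 : ℝ)^(n - 1) / (2 * (n : ℝ))
        - (-1 : ℝ)^n / (4 * (n : ℝ)^2)| ≤ A / (n : ℝ)^3 := by
  refine ⟨1, one_pos, 1, fun n hn => ?_⟩
  have key : |dSeq n| ≤ 1 / (n : ℝ)^3 := by
    have h2 : Tendsto (fun k : ℕ => |dSeq (2 * k) - dSeq n|) atTop (𝓝 |0 - dSeq n|) :=
      (tendsto_dSeq_two_mul.sub tendsto_const_nhds).abs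
    have hev : ∀ᶠ k in atTop, |dSeq (2 * k) - dSeq n| ≤ 1 / (n : ℝ)^3 := by
      filter_upwards [eventually_ge_atTop n] with k hk
      exact dSeq_dist hn (by omega)
    have := le_of_tendsto h2 hev
    rwa [zero_sub, abs_neg] at this
  simpa [dSeq] using key
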